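/- Let G be a group acting on a tree T without inversions, let s = (u,v) be an oriented edge of T with stabiliser S = {g ∈ G : g·u = u and g·v = v}, and for each vertex b of T set Z_b = {g ∈ G : g·b ∈ Y_s}. Then: (1) S·Z_b = Z_b and Z_b is S-almost invariant, i.e. for every h ∈ G the symmetric difference of Z_b and Z_b·h is S-finite; and (2) for any two vertices b and b′ of T, the symmetric difference of Z_b and Z_{b′} is S-finite. -/

import Mathlib

section Defs

variable {G : Type*} [Group G]

/-- `W` is `H`-finite: contained in finitely many left cosets `Hg` of `H` in `G`. -/
def HFinite (H : Subgroup G) (W : Set G) : Prop :=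
  ∃ F : Finset G, W ⊆ ⋃ g ∈ F, (· * g) '' (H : Set G)

/-- The left translate `gX` of a subset `X` of `G`. -/
def leftTr (g : G) (X : Set G) : Set G := (g * ·) '' X

/-- `X` is an `H`-almost invariant subset of `G`: `HX = X` and for every `g` the
symmetric difference of `X` and `Xg` is `H`-finite. -/
def AlmostInv (H : Subgroup G) (X : Set G) : Prop :=
  (∀ h ∈ H, leftTr h X = X) ∧ ∀ g : G, HFinite H (symmDiff X ((· * g) '' X))

/-- `X` is a nontrivial `H`-almost invariant subset of `G`. -/
def NontrivialAI (H : Subgroup G) (X : Set G) : Prop :=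
  AlmostInv H X ∧ ¬ HFinite H X ∧ ¬ HFinite H Xᶜ

/-- `Y` crosses the `H`-almost invariant set `X`: none of the four corner sets is `H`-finite. -/
def Crosses (H : Subgroup G) (X Y : Set G) : Prop :=
  ¬ HFinite H (X ∩ Y) ∧ ¬ HFinite H (X ∩ Yᶜ) ∧ ¬ HFinite H (Xᶜ ∩ Y) ∧ ¬ HFinite H (Xᶜ ∩ Yᶜ)

/-- The coboundary `∂Y` of `Y` with respect to a finite generating set `S`. -/
def bdry (S : Finset G) (Y : Set G) : Set G :=
  {g : G | ∃ s ∈ (S : Set G) ∪ (S : Set G)⁻¹, (g ∈ Y) ≠ (g * s ∈ Y)}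

/-- `Y` crosses the `H`-almost invariant set `X` strongly: neither `∂Y ∩ X` nor
`∂Y ∩ X*` is `H`-finite. -/
def CrossesStrongly (S : Finset G) (H : Subgroup G) (X Y : Set G) : Prop :=
  ¬ HFinite H (bdry S Y ∩ X) ∧ ¬ HFinite H (bdry S Y ∩ Xᶜ)

/-- Two subsets of `G` are nested if one of the four corner sets is empty. -/
def Nested (U V : Set G) : Prop :=
  U ∩ V = ∅ ∨ U ∩ Vᶜ = ∅ ∨ Uᶜ ∩ V = ∅ ∨ Uᶜ ∩ Vᶜ = ∅

/-- The conjugate subgroup `gHg⁻¹`. -/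
def conjSub (g : G) (H : Subgroup G) : Subgroup G :=
  Subgroup.map (MulAut.conj g).toMonoidHom H

/-- A subgroup is two-ended if it contains an infinite cyclic subgroup of finite index. -/
def TwoEnded (H : Subgroup G) : Prop :=
  ∃ z : G, z ∈ H ∧ ¬ IsOfFinOrder z ∧ (Subgroup.zpowers z).relIndex H ≠ 0

/-- `G` is one-ended: `G` is infinite and every almost invariant subset of `G` (over the
trivial group) is finite or cofinite. -/
def OneEnded (G : Type*) [Group G] : Prop :=
  Infinite G ∧ ∀ X : Set G,
    (∀ g : G, (symmDiff X ((· * g) '' X)).Finite) → X.Finite ∨ Xᶜ.Finite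

/-- `G` is finitely presented. -/
def FinitelyPresentedGroup (G : Type*) [Group G] : Prop :=
  ∃ (n : ℕ) (R : Finset (FreeGroup (Fin n))),
    Nonempty (G ≃* FreeGroup (Fin n) ⧸ Subgroup.normalClosure (R : Set (FreeGroup (Fin n))))

/-- `Q(H)`: the collection of subsets of `G` which are almost invariant over some subgroup
commensurable with `H`. -/
def QH (H : Subgroup G) : Set (Set G) :=
  {X : Set G | ∃ K : Subgroup G, Subgroup.Commensurable K H ∧ AlmostInv K X}

/-- The Boolean algebra of subsets of `G` generated by a family `S` of subsets: the smallest
family containing `S` closed under complementation, finite intersections and finite unions. -/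
inductive BoolGen (S : Set (Set G)) : Set G → Prop
  | basic {U : Set G} : U ∈ S → BoolGen S U
  | compl {U : Set G} : BoolGen S U → BoolGen S Uᶜ
  | inter {U V : Set G} : BoolGen S U → BoolGen S V → BoolGen S (U ∩ V)
  | union {U V : Set G} : BoolGen S U → BoolGen S V → BoolGen S (U ∪ V)

/-- A subgroup is virtually free abelian of rank `m` if it has a finite index subgroup
isomorphic to `ℤ^m`. -/
def VirtuallyFreeAbelian (H : Subgroup G) (m : ℕ) : Prop :=
  ∃ K : Subgroup G, K ≤ H ∧ K.relIndex H ≠ 0 ∧ Nonempty (K ≃* Multiplicative (Fin m → ℤ))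

/-- `X` is `n`-canonical with respect to abelian groups: no translate of `X` crosses a
nontrivial almost invariant set over a virtually free abelian subgroup of rank at most `n`. -/
def NCanonicalAb (n : ℕ) (X : Set G) : Prop :=
  ∀ (L : Subgroup G) (m : ℕ), m ≤ n → VirtuallyFreeAbelian L m →
    ∀ Z : Set G, AlmostInv L Z → ¬ HFinite L Z → ¬ HFinite L Zᶜ →
      ∀ g : G, ¬ Crosses L Z (leftTr g X)

variable {ι : Type*}

/-- The set `E` of all translates of the sets `X i` and of their complements. -/
def Translates (X : ι → Set G) : Set (Set G) :=
  {U : Set G | ∃ (g : G) (i : ι), U = leftTr g (X i) ∨ U = (leftTr g (X i))ᶜ}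

/-- `W` is small for the element `U` of `E`: `W` is finite over the group `gHᵢg⁻¹`
associated to `U`. -/
def SmallOver (H : ι → Subgroup G) (X : ι → Set G) (U W : Set G) : Prop :=
  ∃ (g : G) (i : ι), (U = leftTr g (X i) ∨ U = (leftTr g (X i))ᶜ) ∧
    HFinite (conjSub g (H i)) W

/-- The four corner sets `U^{(*)} ∩ V^{(*)}`, indexed by pairs of booleans. -/
def corner (U V : Set G) (p : Bool × Bool) : Set G :=
  (cond p.1 U Uᶜ) ∩ (cond p.2 V Vᶜ)

/-- Condition (*): the family is in good position: whenever two of the four corner sets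
of a pair of elements of `E` are small, one of the corner sets is empty. -/
def GoodPosition (H : ι → Subgroup G) (X : ι → Set G) : Prop :=
  ∀ U ∈ Translates X, ∀ V ∈ Translates X,
    ∀ p q : Bool × Bool, p ≠ q →
      SmallOver H X U (corner U V p) → SmallOver H X U (corner U V q) →
        ∃ r : Bool × Bool, corner U V r = ∅

/-- The relation `U ≤ V` on `E`: `U ∩ V*` is empty or is the only small corner set. -/
def eLE (H : ι → Subgroup G) (X : ι → Set G) (U V : Set G) : Prop :=
  U ∩ Vᶜ = ∅ ∨
    (SmallOver H X U (U ∩ Vᶜ) ∧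
      ∀ p : Bool × Bool, p ≠ (true, false) → ¬ SmallOver H X U (corner U V p))

/-- The relation `U < V` on `E`. -/
def eLT (H : ι → Subgroup G) (X : ι → Set G) (U V : Set G) : Prop :=
  eLE H X U V ∧ U ≠ V

/-- `V` crosses the element `U` of `E`: no corner set is small. -/
def CrossesE (H : ι → Subgroup G) (X : ι → Set G) (U V : Set G) : Prop :=
  ∀ p : Bool × Bool, ¬ SmallOver H X U (corner U V p)

/-- `V` crosses the element `U` of `E` strongly. -/
def StronglyCrossesE (S : Finset G) (H : ι → Subgroup G) (X : ι → Set G) (U V : Set G) : Prop :=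
  ∃ (g : G) (i : ι), (U = leftTr g (X i) ∨ U = (leftTr g (X i))ᶜ) ∧
    ¬ HFinite (conjSub g (H i)) (bdry S V ∩ U) ∧ ¬ HFinite (conjSub g (H i)) (bdry S V ∩ Uᶜ)

/-- The relation on `E` generating the cross-connected components of `Ē`: two elements are
related if they coincide, are complementary, or cross. -/
def ccRelSet (H : ι → Subgroup G) (X : ι → Set G) (U V : Set G) : Prop :=
  U ∈ Translates X ∧ V ∈ Translates X ∧ (U = V ∨ U = Vᶜ ∨ CrossesE H X U V)

/-- `U` and `V` determine the same cross-connected component of `Ē`. -/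
def SameCCC (H : ι → Subgroup G) (X : ι → Set G) (U V : Set G) : Prop :=
  Relation.EqvGen (ccRelSet H X) U V

/-- `V̄` lies between `Ū` and `W̄` in `Ē`: some representatives satisfy `u < v < w`. -/
def BetweenBar (H : ι → Subgroup G) (X : ι → Set G) (U V W : Set G) : Prop :=
  ∃ u v w : Set G, (u = U ∨ u = Uᶜ) ∧ (v = V ∨ v = Vᶜ) ∧ (w = W ∨ w = Wᶜ) ∧
    eLT H X u v ∧ eLT H X v w

/-- The setoid on `E` whose classes are the cross-connected components of `Ē`. -/
def cccSetoid (H : ι → Subgroup G) (X : ι → Set G) :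
    Setoid {U : Set G // U ∈ Translates X} where
  r u v := SameCCC H X u.1 v.1
  iseqv := by
    refine ⟨fun u => Relation.EqvGen.refl _, ?_, ?_⟩
    · exact fun h => Relation.EqvGen.symm _ _ h
    · exact fun h₁ h₂ => Relation.EqvGen.trans _ _ _ h₁ h₂

theorem leftTr_leftTr (g g' : G) (X : Set G) : leftTr g (leftTr g' X) = leftTr (g * g') X := by
  simp only [leftTr, Set.image_image, mul_assoc]

theorem leftTr_compl (g : G) (X : Set G) : leftTr g Xᶜ = (leftTr g X)ᶜ :=
  Set.image_compl_eq (Group.mulLeft_bijective g)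

/-- Left translation as a map from `E` to `E`. -/
def translateE (X : ι → Set G) (g : G) (u : {U : Set G // U ∈ Translates X}) :
    {U : Set G // U ∈ Translates X} :=
  ⟨leftTr g u.1, by
    obtain ⟨g', i, h | h⟩ := u.2
    · exact ⟨g * g', i, Or.inl (by rw [h, leftTr_leftTr])⟩
    · exact ⟨g * g', i, Or.inr (by rw [h, leftTr_compl, leftTr_leftTr])⟩⟩

/-- Betweenness for cross-connected components: `B` lies between the distinct components
`A` and `C` if there are elements enclosed by them with `u < v < w`. -/
def BetweenCCC (H : ι → Subgroup G) (X : ι → Set G)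
    (A B C : Quotient (cccSetoid H X)) : Prop :=
  A ≠ B ∧ B ≠ C ∧ A ≠ C ∧
    ∃ u v w : {U : Set G // U ∈ Translates X},
      Quotient.mk (cccSetoid H X) u = A ∧ Quotient.mk (cccSetoid H X) v = B ∧
        Quotient.mk (cccSetoid H X) w = C ∧
        eLT H X u.1 v.1 ∧ eLT H X v.1 w.1

/-- The half-tree `Y_s` determined by the oriented edge `s = (u,v)`: the vertices
reachable from the terminal vertex `v` after deleting the edge `{u,v}`. -/
def halfTree {V : Type*} (T : SimpleGraph V) (u v : V) : Set V :=
  {w : V | (T.deleteEdges {s(u, v)}).Reachable v w}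

/-- With respect to a base vertex `b`, the subset `Z_s` of `G` determined by the
oriented edge `s = (u,v)`. -/
def Zset {V : Type*} [MulAction G V] (T : SimpleGraph V) (b u v : V) : Set G :=
  {g : G | g • b ∈ halfTree T u v}

/-- The vertex `v` encloses the `H`-almost invariant set `A`: for every edge `s`
oriented towards `v`, either `A ∩ Z_s*` or `A* ∩ Z_s*` is `H`-finite. -/
def Encloses {V : Type*} [MulAction G V] (T : SimpleGraph V) (b : V) (H : Subgroup G)
    (v : V) (A : Set G) : Prop :=
  ∀ u : V, T.Adj u v → HFinite H (A ∩ (Zset T b u v)ᶜ) ∨ HFinite H (Aᶜ ∩ (Zset T b u v)ᶜ)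

end Defs

/-! If `g • b ∈ Y_s` but `g • b' ∉ Y_s`, the `g`-image of a path from `b` to `b'` runs through
the edge `s`, so `g` carries one of the finitely many edges of that path onto `s`. The elements
of `G` carrying a fixed edge onto `s` lie in at most two cosets `S g` of the stabiliser `S` of `s`.
Moreover `Z_b g = Z_{g⁻¹ b}`, so almost invariance is the case `b' = g⁻¹ b`. -/

namespace HFinite

variable {G : Type*} [Group G] {H : Subgroup G}

lemma mono {W W' : Set G} (h : W ⊆ W') (h' : HFinite H W') : HFinite H W :=
  let ⟨F, hF⟩ := h'
  ⟨F, h.trans hF⟩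

lemma union {A B : Set G} (hA : HFinite H A) (hB : HFinite H B) : HFinite H (A ∪ B) := by
  classical
  obtain ⟨F, hF⟩ := hA
  obtain ⟨F', hF'⟩ := hB
  refine ⟨F ∪ F', Set.union_subset (hF.trans ?_) (hF'.trans ?_)⟩
  · exact Set.biUnion_subset_biUnion_left fun g hg => Finset.mem_union_left _ hg
  · exact Set.biUnion_subset_biUnion_left fun g hg => Finset.mem_union_right _ hg

lemma biUnion {ι : Type*} {s : Set ι} (hs : s.Finite) {f : ι → Set G}
    (h : ∀ i ∈ s, HFinite H (f i)) : HFinite H (⋃ i ∈ s, f i) := by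
  induction s, hs using Set.Finite.induction_on with
  | empty => exact ⟨∅, by simp⟩
  | @insert i s _ _ ih =>
    rw [Set.biUnion_insert]
    exact (h i (s.mem_insert i)).union (ih fun j hj => h j (Set.mem_insert_of_mem i hj))

lemma of_mul_inv_mem {W : Set G} (h : ∀ g₁ ∈ W, ∀ g₂ ∈ W, g₁ * g₂⁻¹ ∈ H) : HFinite H W := by
  rcases W.eq_empty_or_nonempty with rfl | ⟨g₀, hg₀⟩
  · exact ⟨∅, Set.empty_subset _⟩
  · exact ⟨{g₀}, fun g hg => Set.mem_biUnion (Finset.mem_singleton_self g₀)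
      ⟨g * g₀⁻¹, h g hg g₀ hg₀, inv_mul_cancel_right g g₀⟩⟩

end HFinite

lemma mem_leftTr_iff {G : Type*} [Group G] {g x : G} {X : Set G} :
    x ∈ leftTr g X ↔ g⁻¹ * x ∈ X := by
  rw [leftTr, Set.image_mul_left, Set.mem_preimage]

section Action

variable {G V : Type*} [Group G] [MulAction G V]

lemma hFinite_setOf_smul_eq_and_smul_eq (x y u v : V) :
    HFinite (MulAction.stabilizer G u ⊓ MulAction.stabilizer G v)
      {g : G | g • x = u ∧ g • y = v} := by
  refine HFinite.of_mul_inv_mem ?_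
  rintro g₁ ⟨hxu₁, hyv₁⟩ g₂ ⟨hxu₂, hyv₂⟩
  refine Subgroup.mem_inf.2 ⟨?_, ?_⟩
  · rw [MulAction.mem_stabilizer_iff, mul_smul, inv_smul_eq_iff.2 hxu₂.symm, hxu₁]
  · rw [MulAction.mem_stabilizer_iff, mul_smul, inv_smul_eq_iff.2 hyv₂.symm, hyv₁]

lemma hFinite_setOf_sym2_map_smul_eq (e : Sym2 V) (u v : V) :
    HFinite (MulAction.stabilizer G u ⊓ MulAction.stabilizer G v)
      {g : G | e.map (g • ·) = s(u, v)} := by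
  induction e using Sym2.ind with
  | h x y =>
    have hvu := hFinite_setOf_smul_eq_and_smul_eq (G := G) x y v u
    rw [inf_comm] at hvu
    refine ((hFinite_setOf_smul_eq_and_smul_eq x y u v).union hvu).mono fun g hg => ?_
    simpa only [Set.mem_ofPred_eq, Sym2.map_mk, Sym2.eq_iff, Set.mem_union] using hg

lemma image_mul_right_Zset (T : SimpleGraph V) (b u v : V) (g : G) :
    (· * g) '' Zset T b u v = Zset T (g⁻¹ • b) u v := by
  ext k
  rw [Set.image_mul_right, Set.mem_preimage, Zset, Zset, Set.mem_ofPred_eq, Set.mem_ofPred_eq,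
    mul_smul]

lemma mem_edges_of_mem_halfTree_of_notMem (T : SimpleGraph V) {u v a c : V} (p : T.Walk a c)
    (ha : a ∈ halfTree T u v) (hc : c ∉ halfTree T u v) : s(u, v) ∈ p.edges := by
  by_contra hp
  exact hc (ha.trans ⟨p.toDeleteEdges {s(u, v)} fun e he he' => hp (he' ▸ he)⟩)

variable (T : SimpleGraph V) (hadj : ∀ (g : G) (x y : V), T.Adj x y → T.Adj (g • x) (g • y))
include hadj

def smulHom (g : G) : T →g T := ⟨(g • ·), hadj g _ _⟩

def smulHomDeleteEdge {g : G} {u v : V} (hu : g • u = u) (hv : g • v = v) :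
    T.deleteEdges {s(u, v)} →g T.deleteEdges {s(u, v)} where
  toFun := (g • ·)
  map_rel' {x y} hxy := by
    rw [SimpleGraph.deleteEdges_adj, Set.mem_singleton_iff] at hxy ⊢
    refine ⟨hadj g x y hxy.1, fun h => hxy.2 (Sym2.map.injective (MulAction.injective g) ?_)⟩
    simpa only [Sym2.map_mk, hu, hv] using h

lemma smul_mem_halfTree {g : G} {u v x : V} (hu : g • u = u) (hv : g • v = v)
    (hx : x ∈ halfTree T u v) : g • x ∈ halfTree T u v := by
  have hgx := hx.map (smulHomDeleteEdge T hadj hu hv)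
  change (T.deleteEdges _).Reachable (g • v) (g • x) at hgx
  rwa [hv] at hgx

lemma leftTr_Zset {g : G} {u v : V}
    (hg : g ∈ MulAction.stabilizer G u ⊓ MulAction.stabilizer G v) (b : V) :
    leftTr g (Zset T b u v) = Zset T b u v := by
  obtain ⟨hu, hv⟩ := Subgroup.mem_inf.1 hg
  have hu' : g⁻¹ • u = u := inv_smul_eq_iff.2 hu.symm
  have hv' : g⁻¹ • v = v := inv_smul_eq_iff.2 hv.symm
  ext k
  rw [mem_leftTr_iff]
  refine ⟨fun hk => ?_, fun hk => ?_⟩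
  · simpa only [Zset, Set.mem_ofPred_eq, mul_smul, smul_inv_smul] using
      smul_mem_halfTree T hadj hu hv hk
  · simpa only [Zset, Set.mem_ofPred_eq, mul_smul] using smul_mem_halfTree T hadj hu' hv' hk

lemma Zset_diff_subset {b b' : V} (p : T.Walk b b') (u v : V) :
    Zset T b u v \ Zset T b' u v ⊆
      ⋃ e ∈ {e | e ∈ p.edges}, {g : G | e.map (g • ·) = s(u, v)} := by
  rintro g ⟨hb, hb'⟩
  have he := mem_edges_of_mem_halfTree_of_notMem T (p.map (smulHom T hadj g)) hb hb'
  obtain ⟨e, he, hge⟩ := List.mem_map.1 (SimpleGraph.Walk.edges_map _ p ▸ he)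
  exact Set.mem_biUnion he hge

lemma hFinite_Zset_diff {b b' : V} (p : T.Walk b b') (u v : V) :
    HFinite (MulAction.stabilizer G u ⊓ MulAction.stabilizer G v)
      (Zset T b u v \ Zset T b' u v) :=
  (HFinite.biUnion p.edges.finite_toSet fun e _ => hFinite_setOf_sym2_map_smul_eq e u v).mono
    (Zset_diff_subset T hadj p u v)

lemma hFinite_symmDiff_Zset (hT : T.Preconnected) (b b' u v : V) :
    HFinite (MulAction.stabilizer G u ⊓ MulAction.stabilizer G v)
      (symmDiff (Zset T b u v) (Zset T b' u v)) := by
  obtain ⟨p⟩ := hT b b'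
  obtain ⟨q⟩ := hT b' b
  rw [Set.symmDiff_def]
  exact (hFinite_Zset_diff T hadj p u v).union (hFinite_Zset_diff T hadj q u v)

lemma almostInv_Zset (hT : T.Preconnected) (b u v : V) :
    AlmostInv (MulAction.stabilizer G u ⊓ MulAction.stabilizer G v) (Zset T b u v) := by
  refine ⟨fun g hg => leftTr_Zset T hadj hg b, fun g => ?_⟩
  rw [image_mul_right_Zset]
  exact hFinite_symmDiff_Zset T hadj hT b (g⁻¹ • b) u v

end Action

theorem stmt0_general {G V : Type*} [Group G] [MulAction G V] (T : SimpleGraph V)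
    (htree : T.IsTree)
    (hadj : ∀ (g : G) (x y : V), T.Adj x y → T.Adj (g • x) (g • y))
    (u v : V) :
    (∀ b : V, AlmostInv (MulAction.stabilizer G u ⊓ MulAction.stabilizer G v)
        (Zset T b u v)) ∧
    (∀ b b' : V, HFinite (MulAction.stabilizer G u ⊓ MulAction.stabilizer G v)
        (symmDiff (Zset T b u v) (Zset T b' u v))) :=
  ⟨fun b => almostInv_Zset T hadj htree.connected.preconnected b u v,
    fun b b' => hFinite_symmDiff_Zset T hadj htree.connected.preconnected b b' u v⟩

/-- For a group acting without inversions on a tree, the set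
`Z_b = {g | g·b ∈ Y_s}` determined by an oriented edge `s = (u,v)` is almost invariant
over the stabiliser `S` of `s` (in particular `S·Z_b = Z_b`), and its equivalence class
is independent of the base vertex `b`. -/
theorem stmt0 {G V : Type*} [Group G] [MulAction G V] (T : SimpleGraph V)
    (htree : T.IsTree)
    (hadj : ∀ (g : G) (x y : V), T.Adj x y → T.Adj (g • x) (g • y))
    (hinv : ∀ (g : G) (x y : V), T.Adj x y → ¬(g • x = y ∧ g • y = x))
    (u v : V) (he : T.Adj u v) :
    (∀ b : V, AlmostInv (MulAction.stabilizer G u ⊓ MulAction.stabilizer G v)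
        (Zset T b u v)) ∧
    (∀ b b' : V, HFinite (MulAction.stabilizer G u ⊓ MulAction.stabilizer G v)
        (symmDiff (Zset T b u v) (Zset T b' u v))) :=
  stmt0_general T htree hadj u v
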